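/- The function (e, τ) ↦ −τ·log(Σ_{j≠i} aⱼ·eⱼ/τ + c), with aⱼ ≥ 0 and c > 0, is jointly convex in (e, τ) on the domain eⱼ ≥ 0, τ > 0. -/

import Mathlib

/-! The map `(u, τ) ↦ τ * log (u / τ)` is the perspective of the concave function `log`, hence
jointly concave on `u > 0, τ > 0`. The function of the theorem is minus its composition with the
linear map `(e, τ) ↦ (∑_{j ≠ i} aⱼ eⱼ + c τ, τ)`, which sends `e ≥ 0, τ > 0` into that region
because `aⱼ ≥ 0` and `c > 0`. -/

open BigOperators

section Perspective

variable {E : Type*} [AddCommGroup E] [Module ℝ E]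

def perspectiveDomain (s : Set E) : Set (E × ℝ) := {p | 0 < p.2 ∧ p.2⁻¹ • p.1 ∈ s}

noncomputable def perspective (φ : E → ℝ) (p : E × ℝ) : ℝ := p.2 * φ (p.2⁻¹ • p.1)

lemma inv_smul_add_smul_eq_add_smul_inv_smul {τ₁ τ₂ s t : ℝ} (hτ₁ : τ₁ ≠ 0) (hτ₂ : τ₂ ≠ 0)
    (hT : s * τ₁ + t * τ₂ ≠ 0) (x₁ x₂ : E) :
    (s * τ₁ + t * τ₂)⁻¹ • (s • x₁ + t • x₂) =
      (s * τ₁ / (s * τ₁ + t * τ₂)) • (τ₁⁻¹ • x₁) + (t * τ₂ / (s * τ₁ + t * τ₂)) • (τ₂⁻¹ • x₂) := by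
  match_scalars <;> field_simp

theorem concaveOn_perspective {φ : E → ℝ} {s : Set E} (hφ : ConcaveOn ℝ s φ) :
    ConcaveOn ℝ (perspectiveDomain s) (perspective φ) := by
  have key : ∀ ⦃p⦄, p ∈ perspectiveDomain s → ∀ ⦃q⦄, q ∈ perspectiveDomain s →
      ∀ ⦃a b : ℝ⦄, 0 ≤ a → 0 ≤ b → a + b = 1 →
      a • p + b • q ∈ perspectiveDomain s ∧
        a • perspective φ p + b • perspective φ q ≤ perspective φ (a • p + b • q) := by
    rintro ⟨x₁, τ₁⟩ ⟨hτ₁, hy₁⟩ ⟨x₂, τ₂⟩ ⟨hτ₂, hy₂⟩ a b ha hb hab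
    dsimp only at hτ₁ hτ₂ hy₁ hy₂
    have hT : 0 < a * τ₁ + b * τ₂ := convex_Ioi (0 : ℝ) hτ₁ hτ₂ ha hb hab
    have hw₁ : 0 ≤ a * τ₁ / (a * τ₁ + b * τ₂) := by positivity
    have hw₂ : 0 ≤ b * τ₂ / (a * τ₁ + b * τ₂) := by positivity
    have hw : a * τ₁ / (a * τ₁ + b * τ₂) + b * τ₂ / (a * τ₁ + b * τ₂) = 1 := by field_simp
    have hcomb := inv_smul_add_smul_eq_add_smul_inv_smul hτ₁.ne' hτ₂.ne' hT.ne' x₁ x₂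
    simp only [perspectiveDomain, perspective, Set.mem_ofPred_eq, Prod.smul_mk, Prod.mk_add_mk,
      smul_eq_mul, hcomb]
    refine ⟨⟨hT, hφ.1 hy₁ hy₂ hw₁ hw₂ hw⟩, ?_⟩
    calc a * (τ₁ * φ (τ₁⁻¹ • x₁)) + b * (τ₂ * φ (τ₂⁻¹ • x₂))
        = (a * τ₁ + b * τ₂) * (a * τ₁ / (a * τ₁ + b * τ₂) * φ (τ₁⁻¹ • x₁) +
            b * τ₂ / (a * τ₁ + b * τ₂) * φ (τ₂⁻¹ • x₂)) := by
          field_simp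
      _ ≤ _ := mul_le_mul_of_nonneg_left (hφ.2 hy₁ hy₂ hw₁ hw₂ hw) hT.le
  exact ⟨fun p hp q hq a b ha hb hab => (key hp hq ha hb hab).1,
    fun p hp q hq a b ha hb hab => (key hp hq ha hb hab).2⟩

end Perspective

/-- The function `(e, τ) ↦ -τ * log (∑_{j ≠ i} aⱼ eⱼ / τ + c)` with `aⱼ ≥ 0`, `c > 0`
is jointly convex on `{(e, τ) : e ≥ 0, τ > 0}`. -/
theorem stmt_9 (K : ℕ) (i : Fin K) (a : Fin K → ℝ) (ha : ∀ j, 0 ≤ a j)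
    (c : ℝ) (hc : 0 < c) :
    ConvexOn ℝ {p : (Fin K → ℝ) × ℝ | (∀ j, 0 ≤ p.1 j) ∧ 0 < p.2}
      (fun p => -(p.2 * Real.log (∑ j ∈ Finset.univ.erase i, a j * p.1 j / p.2 + c))) := by
  let A : (Fin K → ℝ) × ℝ →ₗ[ℝ] ℝ × ℝ :=
    ((∑ j ∈ Finset.univ.erase i, a j • LinearMap.proj j) ∘ₗ LinearMap.fst ℝ _ ℝ
      + c • LinearMap.snd ℝ _ ℝ).prod (LinearMap.snd ℝ _ ℝ)
  have hA : ∀ p, A p = (∑ j ∈ Finset.univ.erase i, a j * p.1 j + c * p.2, p.2) := fun p => by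
    simp [A]
  have hconcave := (concaveOn_perspective strictConcaveOn_log_Ioi.concaveOn).comp_linearMap A
  refine (hconcave.subset ?_ ((convex_Ici 0).prod (convex_Ioi 0))).neg.congr ?_
  · rintro p ⟨he, hτ⟩
    have hτ : 0 < p.2 := hτ
    have hsum : 0 ≤ ∑ j ∈ Finset.univ.erase i, a j * p.1 j :=
      Finset.sum_nonneg fun j _ => mul_nonneg (ha j) (he j)
    refine ⟨hτ, ?_⟩
    simp only [hA, smul_eq_mul, Set.mem_Ioi]
    positivity
  · rintro p ⟨-, hτ⟩
    simp only [Function.comp_apply, Pi.neg_apply, hA, perspective, smul_eq_mul]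
    rw [← Finset.sum_div, inv_mul_eq_div, add_div, mul_div_cancel_right₀ c (Set.mem_Ioi.1 hτ).ne']
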